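/- arXiv:2502.06925 — 2 statements merged into one kernel-verified Lean document; each statement's English description precedes it below -/
import Mathlib

section
/- Let C ≥ 1 and let W_1, …, W_C ∈ ℝ^d be linearly independent vectors and b ∈ ℝ^C. Then there exist class centers μ_1, …, μ_C ∈ ℝ^d such that for every x ∈ ℝ^d and every class y ∈ {1, …, C}, the multinomial regression confidence satisfies softmax((⟨x, W_c⟩ + b_c)_{c=1}^C)_y = exp(−½‖x − μ_y‖²) / Σ_{c=1}^C exp(−½‖x − μ_c‖²). -/
open scoped RealInnerProductSpace

/-- Auxiliary: a dual vector realizing prescribed inner products with a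
linearly independent family. -/
lemma exists_dual_vec {C d : ℕ} (W : Fin C → EuclideanSpace ℝ (Fin d))
    (hW : LinearIndependent ℝ W) (r : Fin C → ℝ) :
    ∃ v : EuclideanSpace ℝ (Fin d), ∀ c, ⟪W c, v⟫ = r c := by
  set S := Submodule.span ℝ (Set.range W)
  let B : Module.Basis (Fin C) ℝ S := Module.Basis.span hW
  have : FiniteDimensional ℝ S := FiniteDimensional.span_of_finite ℝ (Set.finite_range W)
  let f : S →ₗ[ℝ] ℝ := B.constr ℝ r
  let f' : StrongDual ℝ S := LinearMap.toContinuousLinearMap f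
  let v₀ : S := (InnerProductSpace.toDual ℝ S).symm f'
  refine ⟨(v₀ : EuclideanSpace ℝ (Fin d)), fun c => ?_⟩
  have h1 : ⟪v₀, B c⟫ = f' (B c) := InnerProductSpace.toDual_symm_apply
  have h2 : f (B c) = r c := by simp [f]
  have h3 : ((B c : S) : EuclideanSpace ℝ (Fin d)) = W c := congrArg Subtype.val (Module.Basis.span_apply hW c)
  have : ⟪(B c : S), v₀⟫ = r c := by
    rw [real_inner_comm, h1]
    simpa [f'] using h2
  rw [← h3]
  exact this

/-- Theorem 3.1: for a multinomial regression model with linearly independent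
weight vectors, there exist class centers such that the softmax confidences
are given by a nearest-center (Gaussian) form. -/
theorem multinomial_regression_softmax_eq_center_form
    {C d : ℕ} (hC : 1 ≤ C)
    (W : Fin C → EuclideanSpace ℝ (Fin d)) (hW : LinearIndependent ℝ W)
    (b : Fin C → ℝ) :
    ∃ μ : Fin C → EuclideanSpace ℝ (Fin d),
      ∀ (x : EuclideanSpace ℝ (Fin d)) (y : Fin C),
        Real.exp (⟪x, W y⟫ + b y) / (∑ c, Real.exp (⟪x, W c⟫ + b c)) =
          Real.exp (-(1 / 2) * ‖x - μ y‖ ^ 2) /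
            (∑ c, Real.exp (-(1 / 2) * ‖x - μ c‖ ^ 2)) := by
  obtain ⟨v, hv⟩ := exists_dual_vec W hW (fun c => -(1/2) * ‖W c‖ ^ 2 - b c)
  refine ⟨fun c => W c + v, fun x y => ?_⟩
  have key : ∀ c, -(1/2 : ℝ) * ‖x - (W c + v)‖ ^ 2 =
      (⟪x, W c⟫ + b c) + (-(1/2) * ‖x - v‖ ^ 2) := by
    intro c
    have e1 : ‖x - (W c + v)‖ ^ 2 = ‖x‖ ^ 2 - 2 * ⟪x, W c + v⟫ + ‖W c + v‖ ^ 2 :=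
      norm_sub_sq_real x (W c + v)
    have e2 : ‖W c + v‖ ^ 2 = ‖W c‖ ^ 2 + 2 * ⟪W c, v⟫ + ‖v‖ ^ 2 :=
      norm_add_sq_real (W c) v
    have e3 : ‖x - v‖ ^ 2 = ‖x‖ ^ 2 - 2 * ⟪x, v⟫ + ‖v‖ ^ 2 := norm_sub_sq_real x v
    have e4 : ⟪x, W c + v⟫ = ⟪x, W c⟫ + ⟪x, v⟫ := inner_add_right x (W c) v
    have := hv c
    rw [e1, e2, e3, e4]
    linarith
  have hexp : ∀ c, Real.exp (-(1/2 : ℝ) * ‖x - (W c + v)‖ ^ 2) =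
      Real.exp (⟪x, W c⟫ + b c) * Real.exp (-(1/2) * ‖x - v‖ ^ 2) := by
    intro c
    rw [key c, Real.exp_add]
  have hsum : (∑ c, Real.exp (-(1/2 : ℝ) * ‖x - (W c + v)‖ ^ 2)) =
      (∑ c, Real.exp (⟪x, W c⟫ + b c)) * Real.exp (-(1/2) * ‖x - v‖ ^ 2) := by
    rw [Finset.sum_mul]
    exact Finset.sum_congr rfl fun c _ => hexp c
  rw [hsum, hexp y, mul_div_mul_right _ _ (Real.exp_ne_zero _)]
end

section
/- Let C ≥ 1 and let W_1, …, W_C ∈ ℝ^d be linearly independent vectors and b ∈ ℝ^C. Then there exist class centers μ_1, …, μ_C ∈ ℝ^d such that for every x ∈ ℝ^d, the set of classes maximizing the affine score, {y ∈ {1,…,C} : ⟨x, W_y⟩ + b_y ≥ ⟨x, W_c⟩ + b_c for all c}, equals the set of classes with nearest center, {y ∈ {1,…,C} : ‖x − μ_y‖² ≤ ‖x − μ_c‖² for all c}. -/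
open scoped RealInnerProductSpace

/-- Theorem A.1 (Hess et al. 2020): a multinomial regression classifier with
linearly independent weight vectors induces the same classification as a
nearest-center classifier for suitable centers. -/
theorem multinomial_regression_eq_nearest_center
    {C d : ℕ} (hC : 1 ≤ C)
    (W : Fin C → EuclideanSpace ℝ (Fin d)) (hW : LinearIndependent ℝ W)
    (b : Fin C → ℝ) :
    ∃ μ : Fin C → EuclideanSpace ℝ (Fin d),
      ∀ x : EuclideanSpace ℝ (Fin d),
        {y : Fin C | ∀ c : Fin C, ⟪x, W c⟫ + b c ≤ ⟪x, W y⟫ + b y} =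
          {y : Fin C | ∀ c : Fin C, ‖x - μ y‖ ^ 2 ≤ ‖x - μ c‖ ^ 2} := by
  set t : Fin C → ℝ := fun c => -(b c) - ‖W c‖ ^ 2 / 4 with ht
  obtain ⟨v, hv⟩ : ∃ v : EuclideanSpace ℝ (Fin d), ∀ c, ⟪W c, v⟫ = t c := by
    set s : Submodule ℝ (EuclideanSpace ℝ (Fin d)) := Submodule.span ℝ (Set.range W)
    let B : Module.Basis (Fin C) ℝ s := Module.Basis.span hW
    let f0 : s →ₗ[ℝ] ℝ := B.constr ℝ t
    let f : EuclideanSpace ℝ (Fin d) →L[ℝ] ℝ :=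
      (LinearMap.toContinuousLinearMap f0).comp
        ((Submodule.orthogonalProjectionOnto s : EuclideanSpace ℝ (Fin d) →L[ℝ] s))
    refine ⟨(InnerProductSpace.toDual ℝ _).symm f, fun c => ?_⟩
    rw [real_inner_comm, InnerProductSpace.toDual_symm_apply]
    show f0 ((Submodule.orthogonalProjectionOnto s) (W c)) = t c
    have hw : W c = (B c : EuclideanSpace ℝ (Fin d)) := (congrArg Subtype.val (Module.Basis.span_apply hW c)).symm
    rw [hw, Submodule.orthogonalProjectionOnto_mem_subspace_eq_self]
    simp [f0]
  refine ⟨fun c => (1/2 : ℝ) • W c + v, fun x => ?_⟩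
  have key : ∀ c, ‖x - ((1/2:ℝ) • W c + v)‖ ^ 2
      = ‖x‖ ^ 2 - 2 * ⟪x, v⟫ + ‖v‖ ^ 2 - (⟪x, W c⟫ + b c) := by
    intro c
    have h1 := norm_sub_sq_real x ((1/2:ℝ) • W c + v)
    have h2 := norm_add_sq_real ((1/2:ℝ) • W c) v
    have h3 : ‖(1/2:ℝ) • W c‖ ^ 2 = (1/4) * ‖W c‖ ^ 2 := by
      rw [norm_smul]
      simp
      ring
    have h4 := hv c
    rw [ht] at h4
    rw [h1, h2, h3, inner_add_right, inner_smul_right, real_inner_smul_left, h4]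
    ring
  ext y
  simp only [Set.mem_setOf_eq]
  constructor
  · intro h c
    rw [key, key]
    linarith [h c]
  · intro h c
    have hc := h c
    rw [key, key] at hc
    linarith
end
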